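/- arXiv:2006.10697 — 8 statements merged into one kernel-verified Lean document; each statement's English description precedes it below -/
import Mathlib

section
/- The only spoof perfect factorization with a single base is 1^1; that is, if x is an integer and a is a positive integer with 1 + x + x^2 + ... + x^a = 2·x^a, then x = 1 and a = 1. -/
/-!
Multiplying the equation by `x - 1` turns it into `x ^ a * (x - 2) = -1`, so `x - 2` is a unit
of `ℤ`. The case `x - 2 = 1` would force `3 ^ a = -1`, hence `x = 1`, and then the sum is `a + 1`.
-/

open Finset

theorem pow_mul_sub_two_eq_neg_one_of_geom_sum_eq_two_mul_pow {R : Type*} [CommRing R] {x : R}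
    {a : ℕ} (h : ∑ j ∈ range (a + 1), x ^ j = 2 * x ^ a) : x ^ a * (x - 2) = -1 := by
  linear_combination geom_sum_mul x (a + 1) - (x - 1) * h

theorem Int.eq_one_of_pow_mul_sub_two_eq_neg_one {x : ℤ} {a : ℕ} (h : x ^ a * (x - 2) = -1) :
    x = 1 := by
  have hunit : IsUnit (x - 2) := .of_mul_eq_one (-x ^ a) (by linear_combination -h)
  rcases Int.isUnit_iff.mp hunit with hsub | hsub
  · obtain rfl : x = 3 := by omega
    have : (0 : ℤ) < 3 ^ a := by positivity
    omega
  · omega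

theorem stmt_0_general (x : ℤ) (a : ℕ)
    (h : ∑ j ∈ Finset.range (a + 1), x ^ j = 2 * x ^ a) :
    x = 1 ∧ a = 1 := by
  obtain rfl : x = 1 := Int.eq_one_of_pow_mul_sub_two_eq_neg_one
    (pow_mul_sub_two_eq_neg_one_of_geom_sum_eq_two_mul_pow h)
  simp only [one_pow, sum_const, card_range, nsmul_eq_mul, mul_one] at h
  exact ⟨rfl, by omega⟩

theorem stmt_0 (x : ℤ) (a : ℕ) (ha : 1 ≤ a)
    (h : ∑ j ∈ Finset.range (a + 1), x ^ j = 2 * x ^ a) :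
    x = 1 ∧ a = 1 :=
  stmt_0_general x a h
end

section
/- If x^a · y^b is a nontrivial spoof perfect factorization with two bases satisfying x ≤ y, then either x = 2 and y = 2^(a+1) - 1 with b = 1, or (x,y,a,b) is one of the sporadic solutions (-2, 1, 1, 3) or (-3, 1, 1, 2). -/
/-!
Write `σ(x, n) = 1 + x + ⋯ + xⁿ`. Since `σ(x, n) ≡ 1 (mod x)`, it is coprime to `x`, and
`σ(x, n) (x - 1) = x ^ (n + 1) - 1` gives its size. For `x ≤ -2` and `a ≥ 1` we have
`|σ(x, a)| < |x| ^ a`, while `|σ(y, b)| < 2 |y| ^ b` whenever `|y| ≥ 2`; so a negative base forces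
the other base to be `1`, and then `σ(x, a) ∣ 2` forces `a = 1` and `x ∈ {-2, -3}`. For `x = 1`,
`σ(y, b) ∣ 2` is impossible. For `x = 2` the equation reduces to
`(2 ^ (a + 1) - 1) σ(y, b - 1) = y ^ b`, so the unit `σ(y, b - 1)` is `1` and `b = 1`.
For `3 ≤ x < y` the product is too small, and for `x = y` it is divisible by `x` although coprime
to it.
-/

open Finset

def IsSpoofPerfect (x y : ℤ) (a b : ℕ) : Prop :=
  (∑ j ∈ range (a + 1), x ^ j) * (∑ j ∈ range (b + 1), y ^ j) = 2 * x ^ a * y ^ b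

section GeomSum

variable {x : ℤ} {n : ℕ}

theorem isCoprime_geom_sum_self (x : ℤ) (n : ℕ) : IsCoprime (∑ j ∈ range (n + 1), x ^ j) x :=
  ⟨1, -∑ j ∈ range n, x ^ j, by rw [geom_sum_succ]; ring⟩

theorem geom_sum_dvd_two_of_dvd_two_mul_pow {m : ℕ}
    (h : ∑ j ∈ range (n + 1), x ^ j ∣ 2 * x ^ m) : ∑ j ∈ range (n + 1), x ^ j ∣ 2 :=
  (isCoprime_geom_sum_self x n).pow_right.dvd_of_dvd_mul_right h

theorem one_add_le_geom_sum (hx : 0 ≤ x) (hn : 1 ≤ n) : 1 + x ≤ ∑ j ∈ range (n + 1), x ^ j := by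
  calc 1 + x = ∑ j ∈ range 2, x ^ j := by simp [sum_range_succ]
    _ ≤ ∑ j ∈ range (n + 1), x ^ j :=
      sum_le_sum_of_subset_of_nonneg (range_subset_range.2 (by omega))
        fun j _ _ => pow_nonneg hx j

theorem abs_geom_sum_mul_abs_sub_one (x : ℤ) (n : ℕ) :
    |∑ j ∈ range (n + 1), x ^ j| * |x - 1| = |x ^ (n + 1) - 1| := by
  rw [← abs_mul, geom_sum_mul]

theorem abs_geom_sum_lt_pow (hx : x ≤ -2) (hn : 1 ≤ n) :
    |∑ j ∈ range (n + 1), x ^ j| < |x| ^ n := by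
  have hprod := abs_geom_sum_mul_abs_sub_one x n
  have hax : 2 ≤ |x| := by rw [abs_of_neg (by omega)]; omega
  have hsub : |x - 1| = |x| + 1 := by rw [abs_of_neg (by omega), abs_of_neg (by omega)]; ring
  have htri : |x ^ (n + 1) - 1| ≤ |x| * |x| ^ n + 1 := by
    simpa [pow_succ', abs_pow] using abs_sub (x ^ (n + 1)) 1
  have hpow : 2 ≤ |x| ^ n := le_trans hax (le_self_pow₀ (by omega) (by omega))
  by_contra! hle
  nlinarith [mul_le_mul_of_nonneg_right hle (by omega : (0 : ℤ) ≤ |x| + 1)]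

theorem abs_geom_sum_lt_two_mul_pow (hx : 2 ≤ |x|) (n : ℕ) :
    |∑ j ∈ range (n + 1), x ^ j| < 2 * |x| ^ n := by
  have hprod := abs_geom_sum_mul_abs_sub_one x n
  have hpow : 1 ≤ |x| ^ n := one_le_pow₀ (by omega)
  rcases le_or_gt 0 x with hx0 | hx0
  · rw [abs_of_nonneg hx0] at hx hpow ⊢
    rw [abs_of_nonneg (by omega : (0 : ℤ) ≤ x - 1),
      abs_of_nonneg (sub_nonneg.2 (one_le_pow₀ (by omega))), pow_succ'] at hprod
    nlinarith
  · have hsub : |x - 1| = |x| + 1 := by rw [abs_of_neg hx0, abs_of_neg (by omega)]; ring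
    have htri : |x ^ (n + 1) - 1| ≤ |x| * |x| ^ n + 1 := by
      simpa [pow_succ', abs_pow] using abs_sub (x ^ (n + 1)) 1
    nlinarith

theorem two_lt_abs_geom_sum (hx : 2 ≤ |x|) (hn : 2 ≤ n) : 2 < |∑ j ∈ range (n + 1), x ^ j| := by
  have hprod := abs_geom_sum_mul_abs_sub_one x n
  have hsub : |x - 1| ≤ |x| + 1 := by simpa using abs_sub x 1
  have htri : |x| ^ (n + 1) - 1 ≤ |x ^ (n + 1) - 1| := by
    simpa [abs_pow] using abs_sub_abs_le_abs_sub (x ^ (n + 1)) 1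
  have hcube : |x| ^ 3 ≤ |x| ^ (n + 1) := pow_le_pow_right₀ (by omega) (by omega)
  by_contra! hle
  have hmul := mul_le_mul hle hsub (abs_nonneg _) (by norm_num)
  nlinarith [mul_le_mul_of_nonneg_left hx (by positivity : (0 : ℤ) ≤ |x| * |x|)]

end GeomSum

/-- `σ(x, a) < x ^ a · x / (x - 1)`, and `x / (x - 1) · y / (y - 1) ≤ 2` iff
`(x - 2) (y - 2) ≥ 2`. -/
theorem geom_sum_mul_geom_sum_lt {x y : ℤ} (hx : 2 ≤ x) (hy : 2 ≤ y) (hxy : 2 ≤ (x - 2) * (y - 2))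
    (a b : ℕ) :
    (∑ j ∈ range (a + 1), x ^ j) * (∑ j ∈ range (b + 1), y ^ j) < 2 * x ^ a * y ^ b := by
  set s := ∑ j ∈ range (a + 1), x ^ j
  set t := ∑ j ∈ range (b + 1), y ^ j
  have hs : s * (x - 1) < x * x ^ a := by rw [geom_sum_mul, pow_succ']; omega
  have ht : t * (y - 1) < y * y ^ b := by rw [geom_sum_mul, pow_succ']; omega
  have hxy' : x * y ≤ 2 * ((x - 1) * (y - 1)) := by nlinarith
  refine lt_of_mul_lt_mul_right (a := (x - 1) * (y - 1)) ?_ (by nlinarith)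
  calc s * t * ((x - 1) * (y - 1)) = s * (x - 1) * (t * (y - 1)) := by ring
    _ < x * x ^ a * (y * y ^ b) :=
      mul_lt_mul'' hs ht (by nlinarith [geom_sum_pos (x := x) (by omega) a.succ_ne_zero])
        (by nlinarith [geom_sum_pos (x := y) (by omega) b.succ_ne_zero])
    _ = x * y * (x ^ a * y ^ b) := by ring
    _ ≤ 2 * ((x - 1) * (y - 1)) * (x ^ a * y ^ b) :=
      mul_le_mul_of_nonneg_right hxy' (by positivity)
    _ = 2 * x ^ a * y ^ b * ((x - 1) * (y - 1)) := by ring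

namespace IsSpoofPerfect

variable {x y : ℤ} {a b : ℕ}

theorem not_of_le_neg_two (hx : x ≤ -2) (ha : 1 ≤ a) (hy : 2 ≤ |y|) : ¬IsSpoofPerfect x y a b := by
  intro h
  have habs := congrArg abs h
  simp only [abs_mul, abs_pow, abs_two] at habs
  have := mul_lt_mul'' (abs_geom_sum_lt_pow hx ha) (abs_geom_sum_lt_two_mul_pow hy b)
    (abs_nonneg _) (abs_nonneg _)
  linarith

theorem sporadic_of_right_one (h : IsSpoofPerfect x 1 a b) (hx : x ≤ -2) (ha : 1 ≤ a) :
    (x = -2 ∧ a = 1 ∧ b = 3) ∨ (x = -3 ∧ a = 1 ∧ b = 2) := by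
  simp only [IsSpoofPerfect, one_pow, sum_const, card_range, nsmul_eq_mul, mul_one] at h
  have hdvd : ∑ j ∈ range (a + 1), x ^ j ∣ 2 :=
    geom_sum_dvd_two_of_dvd_two_mul_pow (Dvd.intro _ h)
  have hle := Int.le_of_dvd two_pos ((abs_dvd _ _).2 hdvd)
  obtain rfl : a = 1 := by
    by_contra ha1
    have := two_lt_abs_geom_sum (x := x) (by rw [abs_of_neg (by omega)]; omega) (by omega : 2 ≤ a)
    omega
  simp only [sum_range_succ, sum_range_zero, pow_zero, pow_one, zero_add] at h hle
  have hx3 : -3 ≤ x := by rw [abs_le] at hle; omega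
  interval_cases x <;> omega

theorem not_left_one (ha : 1 ≤ a) (hb : 1 ≤ b) (hy : 1 ≤ y) : ¬IsSpoofPerfect 1 y a b := by
  intro h
  simp only [IsSpoofPerfect, one_pow, sum_const, card_range, nsmul_eq_mul, mul_one] at h
  have hdvd : ∑ j ∈ range (b + 1), y ^ j ∣ 2 :=
    geom_sum_dvd_two_of_dvd_two_mul_pow (Dvd.intro_left _ h)
  have hle := Int.le_of_dvd two_pos hdvd
  have hge := one_add_le_geom_sum (by omega : 0 ≤ y) hb
  obtain rfl : y = 1 := by omega
  simp only [one_pow, sum_const, card_range, nsmul_eq_mul, mul_one] at h hle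
  push_cast at h hle
  nlinarith

theorem eq_of_left_two (h : IsSpoofPerfect 2 y a b) (hy : 0 < y) (hb : 1 ≤ b) :
    y = 2 ^ (a + 1) - 1 ∧ b = 1 := by
  obtain ⟨k, rfl⟩ : ∃ k, b = k + 1 := ⟨b - 1, by omega⟩
  have hs : ∑ j ∈ range (a + 1), (2 : ℤ) ^ j = 2 ^ (a + 1) - 1 := by
    simpa using geom_sum_mul (2 : ℤ) (a + 1)
  rw [IsSpoofPerfect, hs, geom_sum_succ' (n := k + 1)] at h
  set u := ∑ j ∈ range (k + 1), y ^ j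
  have key : (2 ^ (a + 1) - 1) * u = y ^ (k + 1) := by linear_combination h
  have hu : u = 1 := by
    have hunit := (isCoprime_geom_sum_self y k).pow_right (n := k + 1) |>.isUnit_of_dvd'
      dvd_rfl (Dvd.intro_left _ key)
    have : 0 < u := geom_sum_pos hy.le k.succ_ne_zero
    rcases Int.isUnit_iff.1 hunit with hu | hu <;> omega
  obtain rfl : k = 0 := by
    by_contra hk
    have := one_add_le_geom_sum hy.le (Nat.one_le_iff_ne_zero.2 hk)
    omega
  rw [hu, zero_add, pow_one, mul_one] at key
  exact ⟨key.symm, rfl⟩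

theorem not_self (hx : ¬IsUnit x) (ha : 1 ≤ a) : ¬IsSpoofPerfect x x a b := by
  intro h
  have hcop := (isCoprime_geom_sum_self x a).mul_left (isCoprime_geom_sum_self x b)
  refine hx (hcop.isUnit_of_dvd' ?_ dvd_rfl)
  rw [IsSpoofPerfect] at h
  rw [h]
  exact ((dvd_pow_self x (by omega)).mul_left 2).mul_right _

end IsSpoofPerfect

theorem stmt_6 (x y : ℤ) (a b : ℕ) (ha : 1 ≤ a) (hb : 1 ≤ b)
    (hx0 : x ≠ 0) (hxm1 : x ≠ -1) (hy0 : y ≠ 0) (hym1 : y ≠ -1) (hxy : x ≤ y)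
    (h : (∑ j ∈ Finset.range (a + 1), x ^ j) * (∑ j ∈ Finset.range (b + 1), y ^ j) =
      2 * x ^ a * y ^ b) :
    (x = 2 ∧ y = 2 ^ (a + 1) - 1 ∧ b = 1) ∨
    (x = -2 ∧ y = 1 ∧ a = 1 ∧ b = 3) ∨
    (x = -3 ∧ y = 1 ∧ a = 1 ∧ b = 2) := by
  have hspoof : IsSpoofPerfect x y a b := h
  rcases (by omega : x ≤ -2 ∨ x = 1 ∨ x = 2 ∨ 3 ≤ x) with hx | rfl | rfl | hx
  · obtain rfl | hy : y = 1 ∨ 2 ≤ |y| := by rw [le_abs]; omega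
    · rcases hspoof.sporadic_of_right_one hx ha with ⟨rfl, rfl, rfl⟩ | ⟨rfl, rfl, rfl⟩ <;> simp
    · exact absurd hspoof (IsSpoofPerfect.not_of_le_neg_two hx ha hy)
  · exact absurd hspoof (IsSpoofPerfect.not_left_one ha hb hxy)
  · exact Or.inl ⟨rfl, hspoof.eq_of_left_two (by omega) hb⟩
  · obtain rfl | hxy := hxy.eq_or_lt
    · exact absurd hspoof (IsSpoofPerfect.not_self (by rw [Int.isUnit_iff]; omega) ha)
    · exact absurd h (geom_sum_mul_geom_sum_lt (by omega) (by omega) (by nlinarith) a b).ne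
end

section
/- In any nontrivial, odd, spoof perfect factorization, exactly one of the exponents is odd. -/
/-!
For odd `x`, `1 + x + ⋯ + x ^ a ≡ a + 1 [ZMOD 2]`, so the factor of an odd exponent is even
and that of an even exponent is odd. Hence the left side is divisible by `2 ^ k`, `k` the number
of odd exponents, and is odd when `k = 0`; the right side is twice an odd number, forcing `k = 1`.
-/

open Finset

theorem Int.odd_geom_sum_iff {x : ℤ} (hx : Odd x) (n : ℕ) :
    Odd (∑ j ∈ Finset.range n, x ^ j) ↔ Odd n := by
  rw [← ZMod.intCast_eq_one_iff_odd, ← ZMod.natCast_eq_one_iff_odd]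
  push_cast
  simp [hx.intCast_zmod_two]

theorem Int.odd_list_prod_iff (l : List ℤ) : Odd l.prod ↔ ∀ x ∈ l, Odd x := by
  induction l with
  | nil => simp
  | cons x l ih => simp [Int.odd_mul, ih]

theorem List.two_pow_length_filter_even_dvd_prod {R : Type*} [CommSemiring R]
    [DecidablePred (Even : R → Prop)] (l : List R) :
    2 ^ (l.filter (Even ·)).length ∣ l.prod := by
  induction l with
  | nil => simp
  | cons x l ih =>
    rw [List.prod_cons, List.filter_cons]
    split_ifs with hx
    · rw [List.length_cons, pow_succ']
      exact mul_dvd_mul (even_iff_two_dvd.mp (of_decide_eq_true hx)) ih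
    · exact ih.mul_left x

theorem Int.le_one_of_two_pow_dvd_two_mul_odd {m : ℤ} (hm : Odd m) {k : ℕ}
    (h : 2 ^ k ∣ 2 * m) : k ≤ 1 := by
  by_contra! hk
  obtain ⟨c, hc⟩ := (pow_dvd_pow (2 : ℤ) hk).trans h
  obtain ⟨d, rfl⟩ := hm
  omega

theorem stmt_7_general (l : List (ℤ × ℕ))
    (hodd : ∀ p ∈ l, Odd p.1)
    (hperf : (l.map fun p => ∑ j ∈ Finset.range (p.2 + 1), p.1 ^ j).prod =
      2 * (l.map fun p => p.1 ^ p.2).prod) :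
    (l.filter fun p => Odd p.2).length = 1 := by
  set σ : ℤ × ℕ → ℤ := fun p => ∑ j ∈ range (p.2 + 1), p.1 ^ j
  have hcount : (l.filter fun p => Odd p.2).length = ((l.map σ).filter (Even ·)).length := by
    rw [List.filter_map, List.length_map]
    congr 1
    refine List.filter_congr fun p hp => ?_
    simp [σ, ← Int.not_odd_iff_even, Int.odd_geom_sum_iff (hodd p hp), Nat.odd_add_one,
      ← Nat.not_even_iff_odd]
  have hodd_rhs : Odd (l.map fun p => p.1 ^ p.2).prod :=
    (Int.odd_list_prod_iff _).2 <| by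
      simp only [List.mem_map]
      rintro _ ⟨p, hp, rfl⟩
      exact (hodd p hp).pow
  have hle : ((l.map σ).filter (Even ·)).length ≤ 1 :=
    Int.le_one_of_two_pow_dvd_two_mul_odd hodd_rhs
      (hperf ▸ List.two_pow_length_filter_even_dvd_prod _)
  have hpos : ((l.map σ).filter (Even ·)).length ≠ 0 := by
    intro h0
    have hσ_odd : Odd (l.map σ).prod :=
      (Int.odd_list_prod_iff _).2 fun x hx => by
        simpa using List.filter_eq_nil_iff.mp (List.length_eq_zero_iff.mp h0) x hx
    exact (Int.not_even_iff_odd.2 hσ_odd) (hperf ▸ even_two_mul _)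
  omega

theorem stmt_7 (l : List (ℤ × ℕ))
    (hnt : ∀ p ∈ l, p.1 ≠ 0 ∧ p.1 ≠ -1)
    (hexp : ∀ p ∈ l, 1 ≤ p.2)
    (hodd : ∀ p ∈ l, Odd p.1)
    (hperf : (l.map fun p => ∑ j ∈ Finset.range (p.2 + 1), p.1 ^ j).prod =
      2 * (l.map fun p => p.1 ^ p.2).prod) :
    (l.filter fun p => Odd p.2).length = 1 :=
  stmt_7_general l hodd hperf
end

section
/- If ∏_i x_i^{a_i} is a nontrivial, odd, spoof perfect factorization and x is the unique base with odd exponent a, then x ≡ 1 (mod 4) and a ≡ 1 (mod 4). -/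
/-!
The right-hand side of the spoof perfect equation is twice an odd number, so no factor
`σ(x, a) = 1 + x + ⋯ + x ^ a` is divisible by `4`. For odd `a` this factor is a sum of an even
number of odd terms: if `x ≡ -1 (mod 4)` they cancel in pairs modulo `4`, so `x ≡ 1 (mod 4)`,
and then `σ(x, a) ≡ a + 1 (mod 4)` forces `a + 1 ≡ 2 (mod 4)`.
-/

lemma Int.geom_sum_modEq_of_modEq_one {n x : ℤ} (h : x ≡ 1 [ZMOD n]) (m : ℕ) :
    ∑ j ∈ Finset.range m, x ^ j ≡ m [ZMOD n] :=
  calc ∑ j ∈ Finset.range m, x ^ j ≡ ∑ j ∈ Finset.range m, (1 : ℤ) ^ j [ZMOD n] :=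
        Int.ModEq.sum fun j _ => h.pow j
    _ = m := by simp

lemma Int.geom_sum_modEq_zero_of_modEq_neg_one {n x : ℤ} (h : x ≡ -1 [ZMOD n]) {m : ℕ}
    (hm : Even m) : ∑ j ∈ Finset.range m, x ^ j ≡ 0 [ZMOD n] :=
  calc ∑ j ∈ Finset.range m, x ^ j ≡ ∑ j ∈ Finset.range m, (-1 : ℤ) ^ j [ZMOD n] :=
        Int.ModEq.sum fun j _ => h.pow j
    _ = 0 := by rw [neg_one_geom_sum, if_pos hm]

lemma Int.odd_list_prod {l : List ℤ} (h : ∀ y ∈ l, Odd y) : Odd l.prod :=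
  List.prod_induction Odd (fun _ _ => Odd.mul) odd_one h

lemma Int.not_four_dvd_two_mul_odd {k : ℤ} (hk : Odd k) : ¬ 4 ∣ 2 * k := by
  obtain ⟨t, rfl⟩ := hk
  omega

lemma not_four_dvd_geom_sum_of_spoof_perfect (l : List (ℤ × ℕ)) (hodd : ∀ p ∈ l, Odd p.1)
    (hperf : (l.map fun p => ∑ j ∈ Finset.range (p.2 + 1), p.1 ^ j).prod =
      2 * (l.map fun p => p.1 ^ p.2).prod)
    {x : ℤ} {a : ℕ} (hmem : (x, a) ∈ l) : ¬ 4 ∣ ∑ j ∈ Finset.range (a + 1), x ^ j := by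
  have hprod_odd : Odd (l.map fun p => p.1 ^ p.2).prod :=
    Int.odd_list_prod <| List.forall_mem_map.mpr fun p hp => (hodd p hp).pow
  have hfactor : ∑ j ∈ Finset.range (a + 1), x ^ j ∣ 2 * (l.map fun p => p.1 ^ p.2).prod :=
    hperf ▸ List.dvd_prod (List.mem_map_of_mem hmem)
  exact fun h4 => Int.not_four_dvd_two_mul_odd hprod_odd (h4.trans hfactor)

theorem stmt_8_general (l : List (ℤ × ℕ))
    (hodd : ∀ p ∈ l, Odd p.1)
    (hperf : (l.map fun p => ∑ j ∈ Finset.range (p.2 + 1), p.1 ^ j).prod =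
      2 * (l.map fun p => p.1 ^ p.2).prod)
    (x : ℤ) (a : ℕ) (hmem : (x, a) ∈ l) (haodd : Odd a) :
    x % 4 = 1 ∧ a % 4 = 1 := by
  have hsigma := not_four_dvd_geom_sum_of_spoof_perfect l hodd hperf hmem
  have hx : x % 2 = 1 := Int.odd_iff.mp (hodd (x, a) hmem)
  have ha : a % 2 = 1 := Nat.odd_iff.mp haodd
  rcases (by omega : x % 4 = 1 ∨ x % 4 = 3) with hx1 | hx3
  · have hmod := Int.geom_sum_modEq_of_modEq_one (n := 4) hx1 (a + 1)
    unfold Int.ModEq at hmod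
    omega
  · have hmod := Int.geom_sum_modEq_zero_of_modEq_neg_one
      (show x ≡ -1 [ZMOD 4] by unfold Int.ModEq; omega) haodd.add_one
    exact absurd (Int.modEq_zero_iff_dvd.mp hmod) hsigma

theorem stmt_8 (l : List (ℤ × ℕ))
    (hnt : ∀ p ∈ l, p.1 ≠ 0 ∧ p.1 ≠ -1)
    (hexp : ∀ p ∈ l, 1 ≤ p.2)
    (hodd : ∀ p ∈ l, Odd p.1)
    (hperf : (l.map fun p => ∑ j ∈ Finset.range (p.2 + 1), p.1 ^ j).prod =
      2 * (l.map fun p => p.1 ^ p.2).prod)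
    (x : ℤ) (a : ℕ) (hmem : (x, a) ∈ l) (haodd : Odd a) :
    x % 4 = 1 ∧ a % 4 = 1 :=
  stmt_8_general l hodd hperf x a hmem haodd
end

section
/- For an odd integer x and positive integer a, the 2-adic valuation of σ̃₋₁(x^a) = ∑_{j=0}^{a} x^{-j} ∈ ℚ equals 1 if and only if x ≡ 1 (mod 4) and a ≡ 1 (mod 4). -/
/-!
Multiplying `∑_{j ≤ a} x^{-j}` by the 2-adic unit `x ^ a` turns it into the integer
`∑_{j ≤ a} x ^ j`, whose 2-adic valuation is 1 exactly when it is `≡ 2 [MOD 4]`.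
Modulo 4 this sum is `a + 1` when `x ≡ 1`, and the alternating sum `∑ (-1)^j ∈ {0, 1}` when
`x ≡ -1`.
-/

open Finset

theorem geom_sum_inv_mul_pow {K : Type*} [DivisionRing K] {x : K} (hx : x ≠ 0) (n : ℕ) :
    (∑ j ∈ range (n + 1), x⁻¹ ^ j) * x ^ n = ∑ j ∈ range (n + 1), x ^ j := by
  induction n with
  | zero => simp
  | succ n ih =>
    rw [sum_range_succ, add_mul, inv_pow, inv_mul_cancel₀ (pow_ne_zero _ hx), pow_succ,
      ← mul_assoc, ih, sum_range_succ' _ (n + 1), sum_mul]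
    simp only [pow_succ, pow_zero]

theorem padicValRat_mul_of_padicValRat_eq_zero {p : ℕ} [Fact p.Prime] {r : ℚ} (hr : r ≠ 0)
    (hvr : padicValRat p r = 0) (q : ℚ) : padicValRat p (q * r) = padicValRat p q := by
  rcases eq_or_ne q 0 with rfl | hq
  · simp
  · rw [padicValRat.mul hq hr, hvr, add_zero]

theorem padicValRat_geom_sum_inv {p : ℕ} [Fact p.Prime] {x : ℤ} (hx : ¬ (p : ℤ) ∣ x) (n : ℕ) :
    padicValRat p (∑ j ∈ range (n + 1), (1 / (x : ℚ)) ^ j) =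
      padicValInt p (∑ j ∈ range (n + 1), x ^ j) := by
  have hx0 : (x : ℚ) ≠ 0 := Int.cast_ne_zero.mpr (by rintro rfl; exact hx (dvd_zero _))
  have hvx : padicValRat p ((x : ℚ) ^ n) = 0 := by
    rw [padicValRat.pow, padicValRat.of_int, padicValInt.eq_zero_of_not_dvd hx]; simp
  rw [← padicValRat.of_int, ← padicValRat_mul_of_padicValRat_eq_zero (pow_ne_zero n hx0) hvx,
    one_div, geom_sum_inv_mul_pow hx0]
  push_cast
  rfl

theorem padicValInt_eq_one_iff {p : ℕ} (hp : p ≠ 1) (a : ℤ) :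
    padicValInt p a = 1 ↔ (p : ℤ) ∣ a ∧ ¬ (p : ℤ) ^ 2 ∣ a := by
  have h1 := padicValInt_dvd_iff_of_ne_one hp 1 a
  have h2 := padicValInt_dvd_iff_of_ne_one hp 2 a
  rw [pow_one] at h1
  rw [h1, h2]
  rcases eq_or_ne a 0 with rfl | ha
  · simp
  · simp only [ha, false_or]
    omega

theorem geom_sum_modEq_of_modEq {x y n : ℤ} (h : x ≡ y [ZMOD n]) (m : ℕ) :
    ∑ j ∈ range m, x ^ j ≡ ∑ j ∈ range m, y ^ j [ZMOD n] :=
  Int.ModEq.sum fun j _ => h.pow j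

theorem geom_sum_emod_four_eq_two_iff {x : ℤ} (hx : Odd x) (m : ℕ) :
    (∑ j ∈ range m, x ^ j) % 4 = 2 ↔ x % 4 = 1 ∧ m % 4 = 2 := by
  have hx2 : x % 2 = 1 := Int.odd_iff.mp hx
  rcases (by omega : x % 4 = 1 ∨ x % 4 = 3) with h | h
  · have hsum := geom_sum_modEq_of_modEq (show x ≡ 1 [ZMOD 4] from h) m
    simp only [one_pow, sum_const, card_range, nsmul_eq_mul, mul_one] at hsum
    rw [hsum]
    omega
  · have hsum := geom_sum_modEq_of_modEq (show x ≡ -1 [ZMOD 4] from h) m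
    rw [neg_one_geom_sum] at hsum
    rw [hsum]
    split_ifs <;> simp [h]

theorem stmt_9_general (x : ℤ) (hx : Odd x) (a : ℕ) :
    padicValRat 2 (∑ j ∈ Finset.range (a + 1), (1 / (x : ℚ)) ^ j) = 1 ↔
      x % 4 = 1 ∧ a % 4 = 1 := by
  have hx2 : ¬ ((2 : ℕ) : ℤ) ∣ x := by have := Int.odd_iff.mp hx; omega
  rw [padicValRat_geom_sum_inv hx2, Nat.cast_eq_one, padicValInt_eq_one_iff (by norm_num)]
  have := geom_sum_emod_four_eq_two_iff hx (a + 1)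
  push_cast
  omega

theorem stmt_9 (x : ℤ) (hx : Odd x) (a : ℕ) (ha : 1 ≤ a) :
    padicValRat 2 (∑ j ∈ Finset.range (a + 1), (1 / (x : ℚ)) ^ j) = 1 ↔
      x % 4 = 1 ∧ a % 4 = 1 :=
  stmt_9_general x hx a
end

section
/- There is no spoof perfect factorization of the form (-3)^a · (-2)^b · 1^3 with a ≥ 2 and b ≥ 4. -/
/-!
Multiplying the spoof equation by `3 = (1 - (-2))` and `4 = (1 - (-3))` turns the geometric sums
into `1 - x` and `1 - y` with `x = (-3)^(a+1)`, `y = (-2)^(b+1)`, and the equation into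
`(1 - x)(1 - y) = x y`, i.e. `x + y = 1`. For `a ≥ 2` we have `27 ∣ x`, so `y ≡ 1 (mod 27)`, and
since `-2` has order `9` modulo `27`, `9 ∣ b + 1`. But `-2` also has order `9` modulo `19`, so then
`y ≡ 1 (mod 19)`, forcing `19 ∣ x`, which is absurd.
-/

lemma neg_three_pow_add_neg_two_pow_eq_one {a b : ℕ}
    (h : (∑ j ∈ Finset.range (a + 1), (-3 : ℤ) ^ j) *
        (∑ j ∈ Finset.range (b + 1), (-2 : ℤ) ^ j) * 4 = 2 * (-3 : ℤ) ^ a * (-2 : ℤ) ^ b) :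
    (-3 : ℤ) ^ (a + 1) + (-2 : ℤ) ^ (b + 1) = 1 := by
  have geom_three := geom_sum_mul (-3 : ℤ) (a + 1)
  have geom_two := geom_sum_mul (-2 : ℤ) (b + 1)
  linear_combination ((-2 : ℤ) ^ (b + 1) - 1) * geom_three +
    (-4 * ∑ j ∈ Finset.range (a + 1), (-3 : ℤ) ^ j) * geom_two - 3 * h

lemma orderOf_neg_two_zmod_27 : orderOf (-2 : ZMod 27) = 9 :=
  orderOf_eq_prime_pow (p := 3) (n := 1) (by decide) (by decide)

lemma orderOf_neg_two_zmod_19 : orderOf (-2 : ZMod 19) = 9 :=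
  orderOf_eq_prime_pow (p := 3) (n := 1) (by decide) (by decide)

lemma neg_three_pow_eq_zero_zmod_27 {n : ℕ} (hn : 3 ≤ n) : (-3 : ZMod 27) ^ n = 0 :=
  pow_eq_zero_of_le hn (by decide)

lemma neg_three_pow_ne_zero_zmod_19 (n : ℕ) : (-3 : ZMod 19) ^ n ≠ 0 := by
  have h : (-3 : ZMod 19) ≠ 0 := by decide
  have : Fact (Nat.Prime 19) := ⟨by norm_num⟩
  exact pow_ne_zero n h

theorem stmt_12 :
    ¬ ∃ (a b : ℕ), 2 ≤ a ∧ 4 ≤ b ∧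
      (∑ j ∈ Finset.range (a + 1), (-3 : ℤ) ^ j) *
        (∑ j ∈ Finset.range (b + 1), (-2 : ℤ) ^ j) * 4 =
      2 * (-3 : ℤ) ^ a * (-2 : ℤ) ^ b := by
  rintro ⟨a, b, ha, -, h⟩
  have hsum := neg_three_pow_add_neg_two_pow_eq_one h
  have mod_27 : (-2 : ZMod 27) ^ (b + 1) = 1 := by
    have hcast := congrArg (Int.cast : ℤ → ZMod 27) hsum
    push_cast at hcast
    rwa [neg_three_pow_eq_zero_zmod_27 (by omega), zero_add] at hcast
  have nine_dvd : 9 ∣ b + 1 := orderOf_neg_two_zmod_27 ▸ orderOf_dvd_of_pow_eq_one mod_27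
  have mod_19 : (-2 : ZMod 19) ^ (b + 1) = 1 :=
    orderOf_dvd_iff_pow_eq_one.1 (orderOf_neg_two_zmod_19 ▸ nine_dvd)
  have hcast := congrArg (Int.cast : ℤ → ZMod 19) hsum
  push_cast at hcast
  rw [mod_19, add_eq_right] at hcast
  exact neg_three_pow_ne_zero_zmod_19 (a + 1) hcast
end

section
/- For every positive integer n, the factorization (-2)^{2n-1} · 1^2 · (2^{2n} - 1)^1 is spoof perfect: (∑_{j=0}^{2n-1} (-2)^j) · 3 · 2^{2n} = 2 · (-2)^{2n-1} · (2^{2n} - 1). -/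
open Finset

theorem geom_sum_neg_two_two_mul_mul_three (n : ℕ) :
    (∑ j ∈ range (2 * n), (-2 : ℤ) ^ j) * 3 = 1 - 2 ^ (2 * n) := by
  rw [← (even_two_mul n).neg_pow, ← geom_sum_mul_neg]
  norm_num

theorem stmt_18 (n : ℕ) (hn : 1 ≤ n) :
    (∑ j ∈ Finset.range (2 * n - 1 + 1), (-2 : ℤ) ^ j) * 3 * 2 ^ (2 * n) =
      2 * (-2 : ℤ) ^ (2 * n - 1) * (2 ^ (2 * n) - 1) := by
  have hm : 2 * n - 1 + 1 = 2 * n := by omega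
  have hpow : (2 : ℤ) ^ (2 * n) = (-2) ^ (2 * n - 1) * (-2) := by
    rw [← pow_succ, hm, (even_two_mul n).neg_pow]
  rw [hm, geom_sum_neg_two_two_mul_mul_three]
  linear_combination (1 - (2 : ℤ) ^ (2 * n)) * hpow
end

section
/- For all positive integers n and m, the factorization 2^n · (2^{n+1})^m · (2^{(n+1)(m+1)} - 1)^1 is spoof perfect: (2^{n+1} - 1) · (∑_{j=0}^{m} 2^{(n+1)j}) · 2^{(n+1)(m+1)} = 2 · 2^n · 2^{(n+1)m} · (2^{(n+1)(m+1)} - 1). -/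
open Finset

theorem sub_one_mul_geom_sum_mul_pow_succ {R : Type*} [CommRing R] (x : R) (m : ℕ) :
    (x - 1) * (∑ j ∈ range (m + 1), x ^ j) * x ^ (m + 1) = x * x ^ m * (x ^ (m + 1) - 1) := by
  rw [mul_comm (x - 1), geom_sum_mul, ← pow_succ']
  ring

theorem stmt_19_general (n m : ℕ) :
    ((2 : ℤ) ^ (n + 1) - 1) * (∑ j ∈ Finset.range (m + 1), (2 : ℤ) ^ ((n + 1) * j)) *
        2 ^ ((n + 1) * (m + 1)) =
      2 * 2 ^ n * 2 ^ ((n + 1) * m) * (2 ^ ((n + 1) * (m + 1)) - 1) := by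
  simpa only [← pow_mul, ← pow_succ'] using sub_one_mul_geom_sum_mul_pow_succ ((2 : ℤ) ^ (n + 1)) m

theorem stmt_19 (n m : ℕ) (hn : 1 ≤ n) (hm : 1 ≤ m) :
    ((2 : ℤ) ^ (n + 1) - 1) * (∑ j ∈ Finset.range (m + 1), (2 : ℤ) ^ ((n + 1) * j)) *
        2 ^ ((n + 1) * (m + 1)) =
      2 * 2 ^ n * 2 ^ ((n + 1) * m) * (2 ^ ((n + 1) * (m + 1)) - 1) :=
  stmt_19_general n m
end
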